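/- arXiv:2208.10527 — 11 statements merged into one kernel-verified Lean document; each statement's English description precedes it below -/
import Mathlib

section
/- Fix ζ, η ∈ ℂ and let 𝒯_{−2}, 𝒯_1 : ℤ → ℂ be the basic Tetranacci polynomials (solutions of ξ_{j+2} = ζξ_j − ξ_{j−2} + η(ξ_{j+1}+ξ_{j−1}) with Kronecker-delta initial values at j = −2,…,1). Then 𝒯_1(j) = 𝒯_{−2}(−1−j) for all j ∈ ℤ. -/
theorem tetranacci_inversion_T1_Tm2 (ζ η : ℂ) (Tm2 T1 : ℤ → ℂ)
    (hTm2rec : ∀ j : ℤ, Tm2 (j + 2) = ζ * Tm2 j - Tm2 (j - 2) + η * (Tm2 (j + 1) + Tm2 (j - 1)))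
    (hT1rec : ∀ j : ℤ, T1 (j + 2) = ζ * T1 j - T1 (j - 2) + η * (T1 (j + 1) + T1 (j - 1)))
    (hTm2init : Tm2 (-2) = 1 ∧ Tm2 (-1) = 0 ∧ Tm2 0 = 0 ∧ Tm2 1 = 0)
    (hT1init : T1 (-2) = 0 ∧ T1 (-1) = 0 ∧ T1 0 = 0 ∧ T1 1 = 1) :
    ∀ j : ℤ, T1 j = Tm2 (-1 - j) := by
  obtain ⟨a1, a2, a3, a4⟩ := hTm2init
  obtain ⟨b1, b2, b3, b4⟩ := hT1init
  have shift : ∀ a b : ℤ, a = b → T1 a = Tm2 (-1 - a) → T1 b = Tm2 (-1 - b) := by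
    rintro a b rfl h; exact h
  have step : ∀ j : ℤ, T1 (j - 2) = Tm2 (-1 - (j - 2)) → T1 (j - 1) = Tm2 (-1 - (j - 1)) →
      T1 j = Tm2 (-1 - j) → T1 (j + 1) = Tm2 (-1 - (j + 1)) →
      T1 (j + 2) = Tm2 (-1 - (j + 2)) := by
    intro j h0 h1 h2 h3
    have A := hT1rec j
    have B := hTm2rec (-1 - j)
    have e1 : (-1 : ℤ) - j + 2 = -1 - (j - 2) := by ring
    have e2 : (-1 : ℤ) - j - 2 = -1 - (j + 2) := by ring
    have e3 : (-1 : ℤ) - j + 1 = -1 - (j - 1) := by ring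
    have e4 : (-1 : ℤ) - j - 1 = -1 - (j + 1) := by ring
    rw [e1, e2, e3, e4] at B
    linear_combination A - B + ζ * h2 - h0 + η * h3 + η * h1
  have bstep : ∀ j : ℤ, T1 (j + 2) = Tm2 (-1 - (j + 2)) → T1 (j + 1) = Tm2 (-1 - (j + 1)) →
      T1 j = Tm2 (-1 - j) → T1 (j - 1) = Tm2 (-1 - (j - 1)) →
      T1 (j - 2) = Tm2 (-1 - (j - 2)) := by
    intro j h0 h1 h2 h3
    have A := hT1rec j
    have B := hTm2rec (-1 - j)
    have e1 : (-1 : ℤ) - j + 2 = -1 - (j - 2) := by ring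
    have e2 : (-1 : ℤ) - j - 2 = -1 - (j + 2) := by ring
    have e3 : (-1 : ℤ) - j + 1 = -1 - (j - 1) := by ring
    have e4 : (-1 : ℤ) - j - 1 = -1 - (j + 1) := by ring
    rw [e1, e2, e3, e4] at B
    linear_combination A - B - h0 + ζ * h2 + η * h1 + η * h3
  have fwd : ∀ n : ℕ, T1 ((n : ℤ) - 2) = Tm2 (-1 - ((n : ℤ) - 2)) ∧
      T1 ((n : ℤ) - 1) = Tm2 (-1 - ((n : ℤ) - 1)) ∧
      T1 (n : ℤ) = Tm2 (-1 - (n : ℤ)) ∧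
      T1 ((n : ℤ) + 1) = Tm2 (-1 - ((n : ℤ) + 1)) := by
    intro n
    induction n with
    | zero => norm_num [a1, a2, a3, a4, b1, b2, b3, b4]
    | succ n ih =>
      obtain ⟨h0, h1, h2, h3⟩ := ih
      have h4 := step n h0 h1 h2 h3
      exact ⟨shift _ _ (by push_cast; ring) h1, shift _ _ (by push_cast; ring) h2,
        shift _ _ (by push_cast; ring) h3, shift _ _ (by push_cast; ring) h4⟩
  have bwd : ∀ n : ℕ, T1 (1 - (n : ℤ)) = Tm2 (-1 - (1 - (n : ℤ))) ∧
      T1 (-(n : ℤ)) = Tm2 (-1 - (-(n : ℤ))) ∧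
      T1 (-1 - (n : ℤ)) = Tm2 (-1 - (-1 - (n : ℤ))) ∧
      T1 (-2 - (n : ℤ)) = Tm2 (-1 - (-2 - (n : ℤ))) := by
    intro n
    induction n with
    | zero => norm_num [a1, a2, a3, a4, b1, b2, b3, b4]
    | succ n ih =>
      obtain ⟨h0, h1, h2, h3⟩ := ih
      have h4 : T1 (-1 - (n : ℤ) - 2) = Tm2 (-1 - (-1 - (n : ℤ) - 2)) :=
        bstep (-1 - (n : ℤ)) (shift _ _ (by ring) h0) (shift _ _ (by ring) h1) h2
          (shift _ _ (by ring) h3)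
      exact ⟨shift _ _ (by push_cast; ring) h1, shift _ _ (by push_cast; ring) h2,
        shift _ _ (by push_cast; ring) h3, shift _ _ (by push_cast; ring) h4⟩
  intro j
  rcases le_or_gt (-2) j with h | h
  · obtain ⟨n, hn⟩ : ∃ n : ℕ, j = (n : ℤ) - 2 := ⟨(j + 2).toNat, by omega⟩
    rw [hn]; exact (fwd n).1
  · obtain ⟨n, hn⟩ : ∃ n : ℕ, j = -2 - (n : ℤ) := ⟨(-2 - j).toNat, by omega⟩
    rw [hn]; exact (bwd n).2.2.2
end

section
/- Fix ζ, η ∈ ℂ and let 𝒯_{−1}, 𝒯_0 : ℤ → ℂ be the basic Tetranacci polynomials with Kronecker-delta initial values. Then 𝒯_0(j) = 𝒯_{−1}(−1−j) for all j ∈ ℤ. -/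
theorem tetranacci_inversion_T0_Tm1 (ζ η : ℂ) (Tm1 T0 : ℤ → ℂ)
    (hTm1rec : ∀ j : ℤ, Tm1 (j + 2) = ζ * Tm1 j - Tm1 (j - 2) + η * (Tm1 (j + 1) + Tm1 (j - 1)))
    (hT0rec : ∀ j : ℤ, T0 (j + 2) = ζ * T0 j - T0 (j - 2) + η * (T0 (j + 1) + T0 (j - 1)))
    (hTm1init : Tm1 (-2) = 0 ∧ Tm1 (-1) = 1 ∧ Tm1 0 = 0 ∧ Tm1 1 = 0)
    (hT0init : T0 (-2) = 0 ∧ T0 (-1) = 0 ∧ T0 0 = 1 ∧ T0 1 = 0) :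
    ∀ j : ℤ, T0 j = Tm1 (-1 - j) := by
  obtain ⟨a1, a2, a3, a4⟩ := hTm1init
  obtain ⟨b1, b2, b3, b4⟩ := hT0init
  have key : ∀ n : ℕ, ∀ j : ℤ, -2 - (n : ℤ) ≤ j → j ≤ 1 + (n : ℤ) → T0 j = Tm1 (-1 - j) := by
    intro n
    induction n with
    | zero =>
      intro j h1 h2
      norm_num at h1 h2
      interval_cases j <;> norm_num [a1, a2, a3, a4, b1, b2, b3, b4]
    | succ n ih =>
      intro j h1 h2
      have hcase : j = (n : ℤ) + 2 ∨ j = -(n : ℤ) - 3 ∨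
          ((-2 - (n : ℤ) ≤ j) ∧ (j ≤ 1 + (n : ℤ))) := by omega
      rcases hcase with hc | hc | hc
      · subst hc
        have e0 := hT0rec (n : ℤ)
        have e1 := hTm1rec (-1 - (n : ℤ))
        have i0 := ih (n : ℤ) (by omega) (by omega)
        have i1 := ih ((n : ℤ) - 2) (by omega) (by omega)
        have i2 := ih ((n : ℤ) + 1) (by omega) (by omega)
        have i3 := ih ((n : ℤ) - 1) (by omega) (by omega)
        ring_nf at e0 e1 i0 i1 i2 i3 ⊢
        linear_combination e0 - e1 + ζ * i0 - i1 + η * i2 + η * i3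
      · subst hc
        have e0 := hT0rec (-(n : ℤ) - 1)
        have e1 := hTm1rec (n : ℤ)
        have i0 := ih (-(n : ℤ) - 1) (by omega) (by omega)
        have i1 := ih (-(n : ℤ) + 1) (by omega) (by omega)
        have i2 := ih (-(n : ℤ)) (by omega) (by omega)
        have i3 := ih (-(n : ℤ) - 2) (by omega) (by omega)
        ring_nf at e0 e1 i0 i1 i2 i3 ⊢
        linear_combination e0 - e1 + ζ * i0 - i1 + η * i2 + η * i3
      · exact ih j hc.1 hc.2
  intro j
  exact key j.natAbs j (by omega) (by omega)
end

section
/- Fix ζ, η ∈ ℂ and let 𝒯_{−2} : ℤ → ℂ be the basic Tetranacci polynomial with initial values 𝒯_{−2}(−2) = 1 and 𝒯_{−2}(−1) = 𝒯_{−2}(0) = 𝒯_{−2}(1) = 0. Then 𝒯_{−2} is odd: 𝒯_{−2}(j) = −𝒯_{−2}(−j) for all j ∈ ℤ. -/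
theorem tetranacci_Tm2_odd (ζ η : ℂ) (Tm2 : ℤ → ℂ)
    (hrec : ∀ j : ℤ, Tm2 (j + 2) = ζ * Tm2 j - Tm2 (j - 2) + η * (Tm2 (j + 1) + Tm2 (j - 1)))
    (hinit : Tm2 (-2) = 1 ∧ Tm2 (-1) = 0 ∧ Tm2 0 = 0 ∧ Tm2 1 = 0) :
    ∀ j : ℤ, Tm2 j = -Tm2 (-j) := by
  obtain ⟨h2, h1, h0, hp1⟩ := hinit
  have htwo : Tm2 2 = -1 := by
    have := hrec 0
    norm_num [h0, h1, h2, hp1] at this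
    simpa using this
  have key : ∀ n : ℕ, Tm2 n = -Tm2 (-n) := by
    intro n
    induction n using Nat.strong_induction_on with
    | _ n ih =>
      match n with
      | 0 => norm_num [h0]
      | 1 => norm_num [hp1, h1]
      | 2 => norm_num [htwo, h2]
      | 3 =>
        have e1 : Tm2 (3 : ℤ) = -η := by
          have := hrec 1
          norm_num [hp1, h1, h0, htwo] at this
          simpa using this
        have e2 : Tm2 (-3 : ℤ) = η := by
          have := hrec (-1)
          norm_num [hp1, h1, h0, h2] at this
          linear_combination this
        norm_num [e1, e2]
      | (n+4) =>
        have e1 : Tm2 ((n:ℤ)+4) = ζ * Tm2 ((n:ℤ)+2) - Tm2 ((n:ℤ)) + η * (Tm2 ((n:ℤ)+3) + Tm2 ((n:ℤ)+1)) := by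
          simpa [show ((n:ℤ)+2+2) = (n:ℤ)+4 by ring, show ((n:ℤ)+2-2) = (n:ℤ) by ring,
            show ((n:ℤ)+2+1) = (n:ℤ)+3 by ring, show ((n:ℤ)+2-1) = (n:ℤ)+1 by ring]
            using hrec ((n:ℤ)+2)
        have e2 : Tm2 (-(n:ℤ)) = ζ * Tm2 (-((n:ℤ)+2)) - Tm2 (-((n:ℤ)+4)) + η * (Tm2 (-((n:ℤ)+1)) + Tm2 (-((n:ℤ)+3))) := by
          have h := hrec (-((n:ℤ)+2))
          rw [show (-((n:ℤ)+2)+2 : ℤ) = -(n:ℤ) by ring, show (-((n:ℤ)+2)-2 : ℤ) = -((n:ℤ)+4) by ring,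
            show (-((n:ℤ)+2)+1 : ℤ) = -((n:ℤ)+1) by ring, show (-((n:ℤ)+2)-1 : ℤ) = -((n:ℤ)+3) by ring] at h
          exact h
        have i0 := ih n (by omega)
        have i1 := ih (n+1) (by omega)
        have i2 := ih (n+2) (by omega)
        have i3 := ih (n+3) (by omega)
        push_cast at i0 i1 i2 i3 ⊢
        linear_combination e1 + e2 - i0 + ζ * i2 + η * (i1 + i3)
  intro j
  rcases le_or_gt 0 j with h | h
  · obtain ⟨n, rfl⟩ := Int.eq_ofNat_of_zero_le h
    exact key n
  · have h' : (0:ℤ) ≤ -j := by omega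
    obtain ⟨n, hn⟩ := Int.eq_ofNat_of_zero_le h'
    have := key n
    rw [← hn] at this
    rw [this]
    simp
end

section
/- Fix ζ, η ∈ ℂ and let 𝒯_i (i = −2,…,1) be the basic Tetranacci polynomials. Then for all j ∈ ℤ: 𝒯_{−1}(j) = 𝒯_{−2}(j−1) − η·𝒯_{−2}(j), 𝒯_0(j) = η·𝒯_{−2}(j+1) − 𝒯_{−2}(j+2), and 𝒯_1(j) = −𝒯_{−2}(j+1). Hence all four basic Tetranacci polynomials are determined by 𝒯_{−2}. -/
/-!
The solutions of the symmetric Tetranacci recursion form a module that is stable under index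
shifts, and a solution is determined by its values at `-2, -1, 0, 1`. Each right-hand side is a
combination of shifts of `𝒯₋₂`, hence a solution, and a direct evaluation shows that it has the
same four initial values as the corresponding basic polynomial.
-/

namespace Tetranacci

variable {R : Type*} [CommRing R] (ζ η : R)

def solutions : Submodule R (ℤ → R) where
  carrier := {ξ | ∀ j, ξ (j + 2) = ζ * ξ j - ξ (j - 2) + η * (ξ (j + 1) + ξ (j - 1))}
  zero_mem' _ := by simp
  add_mem' {ξ ξ'} hξ hξ' j := by
    simp only [Pi.add_apply, hξ j, hξ' j]
    ring
  smul_mem' c ξ hξ j := by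
    simp only [Pi.smul_apply, smul_eq_mul, hξ j]
    ring

variable {ζ η}

theorem mem_solutions {ξ : ℤ → R} :
    ξ ∈ solutions ζ η ↔
      ∀ j, ξ (j + 2) = ζ * ξ j - ξ (j - 2) + η * (ξ (j + 1) + ξ (j - 1)) :=
  Iff.rfl

theorem shift_mem_solutions {ξ : ℤ → R} (hξ : ξ ∈ solutions ζ η) (k : ℤ) :
    (fun j => ξ (j + k)) ∈ solutions ζ η := fun j => by
  simpa only [add_right_comm _ _ k, sub_add_eq_add_sub] using hξ (j + k)

theorem eq_zero_of_window {ξ : ℤ → R} (hξ : ξ ∈ solutions ζ η)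
    (hm2 : ξ (-2) = 0) (hm1 : ξ (-1) = 0) (h0 : ξ 0 = 0) (h1 : ξ 1 = 0) : ξ = 0 := by
  suffices window : ∀ n : ℤ, ξ (n - 2) = 0 ∧ ξ (n - 1) = 0 ∧ ξ n = 0 ∧ ξ (n + 1) = 0 from
    funext fun n => (window n).2.2.1
  intro n
  induction n using Int.induction_on with
  | zero => exact ⟨hm2, hm1, h0, h1⟩
  | succ n ih =>
    obtain ⟨a, b, c, d⟩ := ih
    have e : ξ (n + 2) = 0 := by rw [hξ n, a, b, c, d]; ring
    refine ⟨?_, ?_, d, ?_⟩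
    · convert b using 2; ring
    · convert c using 2; ring
    · convert e using 2; ring
  | pred n ih =>
    obtain ⟨a, b, c, d⟩ := ih
    have e : ξ (-n - 3) = 0 := by
      have := hξ (-n - 1)
      rw [show -(n : ℤ) - 1 + 2 = -n + 1 by ring, show -(n : ℤ) - 1 + 1 = -n by ring,
        show -(n : ℤ) - 1 - 1 = -n - 2 by ring, show -(n : ℤ) - 1 - 2 = -n - 3 by ring,
        a, b, c, d] at this
      linear_combination this
    refine ⟨?_, ?_, b, ?_⟩
    · convert e using 2; ring
    · convert a using 2; ring
    · convert c using 2; ring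

theorem eq_of_window {ξ ξ' : ℤ → R} (hξ : ξ ∈ solutions ζ η) (hξ' : ξ' ∈ solutions ζ η)
    (hm2 : ξ (-2) = ξ' (-2)) (hm1 : ξ (-1) = ξ' (-1)) (h0 : ξ 0 = ξ' 0) (h1 : ξ 1 = ξ' 1) :
    ξ = ξ' :=
  sub_eq_zero.mp <| eq_zero_of_window (sub_mem hξ hξ')
    (sub_eq_zero.mpr hm2) (sub_eq_zero.mpr hm1) (sub_eq_zero.mpr h0) (sub_eq_zero.mpr h1)

end Tetranacci

open Tetranacci

theorem tetranacci_basic_from_Tm2 (ζ η : ℂ) (Tm2 Tm1 T0 T1 : ℤ → ℂ)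
    (hTm2rec : ∀ j : ℤ, Tm2 (j + 2) = ζ * Tm2 j - Tm2 (j - 2) + η * (Tm2 (j + 1) + Tm2 (j - 1)))
    (hTm1rec : ∀ j : ℤ, Tm1 (j + 2) = ζ * Tm1 j - Tm1 (j - 2) + η * (Tm1 (j + 1) + Tm1 (j - 1)))
    (hT0rec : ∀ j : ℤ, T0 (j + 2) = ζ * T0 j - T0 (j - 2) + η * (T0 (j + 1) + T0 (j - 1)))
    (hT1rec : ∀ j : ℤ, T1 (j + 2) = ζ * T1 j - T1 (j - 2) + η * (T1 (j + 1) + T1 (j - 1)))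
    (hTm2init : Tm2 (-2) = 1 ∧ Tm2 (-1) = 0 ∧ Tm2 0 = 0 ∧ Tm2 1 = 0)
    (hTm1init : Tm1 (-2) = 0 ∧ Tm1 (-1) = 1 ∧ Tm1 0 = 0 ∧ Tm1 1 = 0)
    (hT0init : T0 (-2) = 0 ∧ T0 (-1) = 0 ∧ T0 0 = 1 ∧ T0 1 = 0)
    (hT1init : T1 (-2) = 0 ∧ T1 (-1) = 0 ∧ T1 0 = 0 ∧ T1 1 = 1) :
    ∀ j : ℤ, Tm1 j = Tm2 (j - 1) - η * Tm2 j ∧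
      T0 j = η * Tm2 (j + 1) - Tm2 (j + 2) ∧
      T1 j = -Tm2 (j + 1) := by
  obtain ⟨Tm2_neg2, Tm2_neg1, Tm2_zero, Tm2_one⟩ := hTm2init
  have hTm2 : Tm2 ∈ solutions ζ η := mem_solutions.mpr hTm2rec
  have Tm2_neg3 : Tm2 (-3) = η := by
    have := hTm2rec (-1)
    norm_num [Tm2_neg2, Tm2_neg1, Tm2_zero, Tm2_one] at this
    linear_combination this
  have Tm2_two : Tm2 2 = -1 := by
    have := hTm2rec 0
    norm_num [Tm2_neg2, Tm2_neg1, Tm2_zero, Tm2_one] at this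
    exact this
  have Tm2_three : Tm2 3 = -η := by
    have := hTm2rec 1
    norm_num [Tm2_neg1, Tm2_zero, Tm2_one, Tm2_two] at this
    exact this
  have hTm1 : Tm1 = (fun j => Tm2 (j + -1)) - η • Tm2 :=
    eq_of_window (mem_solutions.mpr hTm1rec)
      (sub_mem (shift_mem_solutions hTm2 _) (Submodule.smul_mem _ η hTm2))
      (by norm_num [hTm1init, Tm2_neg3, Tm2_neg2]) (by norm_num [hTm1init, Tm2_neg2, Tm2_neg1])
      (by norm_num [hTm1init, Tm2_neg1, Tm2_zero]) (by norm_num [hTm1init, Tm2_zero, Tm2_one])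
  have hT0 : T0 = η • (fun j => Tm2 (j + 1)) - fun j => Tm2 (j + 2) :=
    eq_of_window (mem_solutions.mpr hT0rec)
      (sub_mem (Submodule.smul_mem _ η (shift_mem_solutions hTm2 _)) (shift_mem_solutions hTm2 _))
      (by norm_num [hT0init, Tm2_neg1, Tm2_zero]) (by norm_num [hT0init, Tm2_zero, Tm2_one])
      (by norm_num [hT0init, Tm2_one, Tm2_two]) (by norm_num [hT0init, Tm2_two, Tm2_three])
  have hT1 : T1 = -fun j => Tm2 (j + 1) :=
    eq_of_window (mem_solutions.mpr hT1rec) (neg_mem (shift_mem_solutions hTm2 _))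
      (by norm_num [hT1init, Tm2_neg1]) (by norm_num [hT1init, Tm2_zero])
      (by norm_num [hT1init, Tm2_one]) (by norm_num [hT1init, Tm2_two])
  exact fun j => ⟨congrFun hTm1 j, congrFun hT0 j, congrFun hT1 j⟩
end

section
/- Fix ζ, η ∈ ℂ and let ξ : ℤ → ℂ satisfy the symmetric Tetranacci recursion with initial values g_{−2}, g_{−1}, g_0, g_1. If g_{−2} = g_1 and g_{−1} = g_0, then ξ_{−1−j} = ξ_j for all j ∈ ℤ. -/
theorem tetranacci_palindromic_symmetry (ζ η : ℂ) (ξ : ℤ → ℂ)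
    (hrec : ∀ j : ℤ, ξ (j + 2) = ζ * ξ j - ξ (j - 2) + η * (ξ (j + 1) + ξ (j - 1)))
    (h1 : ξ (-2) = ξ 1) (h2 : ξ (-1) = ξ 0) :
    ∀ j : ℤ, ξ (-1 - j) = ξ j := by
  have key : ∀ n : ℕ, ξ (-(n : ℤ) - 1) = ξ ((n : ℤ)) := by
    intro n
    induction n using Nat.strong_induction_on with
    | _ n ih =>
      match n, ih with
      | 0, _ => simpa using h2
      | 1, _ => simpa using h1
      | 2, _ =>
        have e1 := hrec 0
        have e2 := hrec (-1)
        norm_num at e1 e2 ⊢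
        linear_combination e2 - e1 + (ζ-η)*h2 + (1+η)*h1
      | 3, ih =>
        have ih2 := ih 2 (by omega)
        have e1 := hrec 1
        have e2 := hrec (-2)
        norm_num at e1 e2 ih2 ⊢
        linear_combination e2 - e1 + ζ*h1 + (1+η)*h2 + η*ih2
      | (m + 4), ih =>
        have i0 := ih m (by omega)
        have i1 := ih (m+1) (by omega)
        have i2 := ih (m+2) (by omega)
        have i3 := ih (m+3) (by omega)
        have e1 := hrec ((m:ℤ) + 2)
        have e2 := hrec (-(m:ℤ) - 3)
        push_cast at i0 i1 i2 i3 ⊢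
        have a1 : (-(m:ℤ) - 3 + 2) = -(m:ℤ) - 1 := by ring
        have a2 : (-(m:ℤ) - 3 - 2) = -((m:ℤ) + 4) - 1 := by ring
        have a3 : (-(m:ℤ) - 3 + 1) = -((m:ℤ) + 1) - 1 := by ring
        have a4 : (-(m:ℤ) - 3 - 1) = -((m:ℤ) + 3) - 1 := by ring
        have a5 : (-((m:ℤ) + 2) - 1) = -(m:ℤ) - 3 := by ring
        have b1 : ((m:ℤ) + 2 + 2) = (m:ℤ) + 4 := by ring
        have b2 : ((m:ℤ) + 2 - 2) = (m:ℤ) := by ring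
        have b3 : ((m:ℤ) + 2 + 1) = (m:ℤ) + 3 := by ring
        have b4 : ((m:ℤ) + 2 - 1) = (m:ℤ) + 1 := by ring
        rw [a1, a2, a3, a4] at e2
        rw [b1, b2, b3, b4] at e1
        rw [a5] at i2
        linear_combination e2 - e1 - i0 + ζ*i2 + η*i1 + η*i3
  intro j
  rcases le_or_gt 0 j with h | h
  · obtain ⟨n, rfl⟩ := Int.eq_ofNat_of_zero_le h
    have := key n
    rw [show (-1 - (n:ℤ)) = -(n:ℤ) - 1 from by ring, this]
  · obtain ⟨n, rfl⟩ : ∃ n : ℕ, j = -(n:ℤ) - 1 := ⟨(-j - 1).toNat, by omega⟩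
    have := key n
    rw [show (-1 - (-(n:ℤ) - 1)) = (n:ℤ) from by ring, this]
end

section
/- Let ζ, η ∈ ℂ and suppose S₁ = S₂ =: S is a double root of S² − ηS − ζ − 2 = 0 (equivalently η² + 4(ζ+2) = 0, with S = η/2). Let φ : ℤ → ℂ satisfy φ(j+1) = S·φ(j) − φ(j−1), φ(0)=0, φ(1)=1. Then the sequence j ↦ j·φ(j) satisfies the symmetric Tetranacci recursion ξ_{j+2} = ζξ_j − ξ_{j−2} + η(ξ_{j+1}+ξ_{j−1}) for all j ∈ ℤ. -/
theorem jphi_is_tetranacci (ζ η S : ℂ) (hη : η = 2 * S) (hζ : ζ = -S ^ 2 - 2)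
    (φ : ℤ → ℂ) (hrec : ∀ j : ℤ, φ (j + 1) = S * φ j - φ (j - 1))
    (h0 : φ 0 = 0) (h1 : φ 1 = 1) :
    ∀ j : ℤ, ((j + 2 : ℤ) : ℂ) * φ (j + 2) =
      ζ * ((j : ℂ) * φ j) - ((j - 2 : ℤ) : ℂ) * φ (j - 2) +
        η * (((j + 1 : ℤ) : ℂ) * φ (j + 1) + ((j - 1 : ℤ) : ℂ) * φ (j - 1)) := by
  intro j
  have h1' : φ (j + 1) = S * φ j - φ (j - 1) := hrec j
  have h2 : φ (j + 2) = S * (S * φ j - φ (j - 1)) - φ j := by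
    have := hrec (j + 1)
    rw [show j + 1 + 1 = j + 2 by ring, show j + 1 - 1 = j by ring] at this
    rw [this, h1']
  have h3 : φ (j - 2) = S * φ (j - 1) - φ j := by
    have := hrec (j - 1)
    rw [show j - 1 + 1 = j by ring, show j - 1 - 1 = j - 2 by ring] at this
    linear_combination this
  subst hη hζ
  rw [h1', h2, h3]
  push_cast
  ring
end

section
/- Let ζ, η ∈ ℂ with η = 2S, ζ = −S² − 2, and additionally S² = 4. Let φ : ℤ → ℂ satisfy φ(j+1) = S·φ(j) − φ(j−1), φ(0)=0, φ(1)=1. Then j ↦ j²·φ(j) satisfies the symmetric Tetranacci recursion ξ_{j+2} = ζξ_j − ξ_{j−2} + η(ξ_{j+1}+ξ_{j−1}) for all j ∈ ℤ. -/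
theorem j2phi_is_tetranacci (ζ η S : ℂ) (hη : η = 2 * S) (hζ : ζ = -S ^ 2 - 2)
    (hS4 : S ^ 2 = 4)
    (φ : ℤ → ℂ) (hrec : ∀ j : ℤ, φ (j + 1) = S * φ j - φ (j - 1))
    (h0 : φ 0 = 0) (h1 : φ 1 = 1) :
    ∀ j : ℤ, ((j + 2 : ℤ) : ℂ) ^ 2 * φ (j + 2) =
      ζ * (((j : ℤ) : ℂ) ^ 2 * φ j) - ((j - 2 : ℤ) : ℂ) ^ 2 * φ (j - 2) +
        η * (((j + 1 : ℤ) : ℂ) ^ 2 * φ (j + 1) + ((j - 1 : ℤ) : ℂ) ^ 2 * φ (j - 1)) := by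
  subst hη hζ
  intro j
  have e1 := hrec j
  have e2 := hrec (j + 1)
  rw [show j + 1 + 1 = j + 2 from by ring, show j + 1 - 1 = j from by ring] at e2
  have e3 := hrec (j - 1)
  rw [show j - 1 + 1 = j from by ring] at e3
  have e3' : φ (j - 2) = S * φ (j - 1) - φ j := by
    rw [show j - 2 = j - 1 - 1 from by ring]; linear_combination e3
  rw [e2, e1, e3']
  push_cast
  linear_combination (2 * φ j) * hS4
end

section
/- Let ζ, η ∈ ℂ and let S₁ ≠ S₂ be the two roots of S² − ηS − ζ − 2 = 0. For l = 1,2 let φ_l : ℤ → ℂ satisfy φ_l(j+1) = S_l·φ_l(j) − φ_l(j−1), φ_l(0)=0, φ_l(1)=1. Then the basic Tetranacci polynomial 𝒯_{−2} (the solution of the symmetric Tetranacci recursion with 𝒯_{−2}(−2)=1 and 𝒯_{−2}(−1)=𝒯_{−2}(0)=𝒯_{−2}(1)=0) is given by 𝒯_{−2}(j) = (φ₂(j) − φ₁(j))/(S₁ − S₂) for all j ∈ ℤ. -/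
/-!
With `E` the shift `f ↦ f (· + 1)`, the symmetric Tetranacci operator is `p(E + E⁻¹)` for
`p(x) = x² - ηx - ζ - 2`, while `E + E⁻¹` acts on `φ_l` as multiplication by `S_l`. Since
`p(S_l) = 0`, both `φ_l` are Tetranacci solutions, hence so is `φ₂ - φ₁`. It agrees with
`(S₁ - S₂) 𝒯₋₂` at `-2, -1, 0, 1` (using `φ_l(-1) = -1`, `φ_l(-2) = -S_l`), and a solution is
determined by four consecutive values because the recursion can be solved for its highest as well
as its lowest term.
-/

theorem Int.forall_of_four_consecutive {P : ℤ → Prop} (j₀ : ℤ)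
    (h₀ : P j₀) (h₁ : P (j₀ + 1)) (h₂ : P (j₀ + 2)) (h₃ : P (j₀ + 3))
    (up : ∀ j, P j → P (j + 1) → P (j + 2) → P (j + 3) → P (j + 4))
    (down : ∀ j, P (j + 1) → P (j + 2) → P (j + 3) → P (j + 4) → P j) :
    ∀ j, P j := by
  let W : ℤ → Prop := fun j => P j ∧ P (j + 1) ∧ P (j + 2) ∧ P (j + 3)
  have shift : ∀ j, W j ↔ W (j + 1) := fun j => by
    simp only [W, add_assoc, show (1 : ℤ) + 1 = 2 by norm_num, show (1 : ℤ) + 2 = 3 by norm_num,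
      show (1 : ℤ) + 3 = 4 by norm_num]
    exact ⟨fun ⟨a, b, c, d⟩ => ⟨b, c, d, up j a b c d⟩,
      fun ⟨b, c, d, e⟩ => ⟨down j b c d e, b, c, d⟩⟩
  intro j
  refine (Int.inductionOn' (motive := W) j j₀ ⟨h₀, h₁, h₂, h₃⟩
    (fun k _ hk => (shift k).1 hk) (fun k _ hk => (shift (k - 1)).2 ?_)).1
  rwa [sub_add_cancel]

variable {R : Type*} [CommRing R]

def IsSymmFibonacci (S : R) (φ : ℤ → R) : Prop :=
  ∀ j, φ (j + 1) = S * φ j - φ (j - 1)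

def symmTetranacci (ζ η : R) : Submodule R (ℤ → R) where
  carrier := {f | ∀ j, f (j + 2) = ζ * f j - f (j - 2) + η * (f (j + 1) + f (j - 1))}
  add_mem' {f g} hf hg j := by
    simp only [Pi.add_apply, hf j, hg j]; ring
  zero_mem' j := by simp
  smul_mem' c f hf j := by
    simp only [Pi.smul_apply, smul_eq_mul, hf j]; ring

namespace IsSymmFibonacci

variable {S : R} {φ : ℤ → R}

theorem apply_neg_one (hφ : IsSymmFibonacci S φ) (h₀ : φ 0 = 0) (h₁ : φ 1 = 1) :
    φ (-1) = -1 := by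
  have := hφ 0
  norm_num [h₀, h₁] at this
  linear_combination this

theorem apply_neg_two (hφ : IsSymmFibonacci S φ) (h₀ : φ 0 = 0) (h₁ : φ 1 = 1) :
    φ (-2) = -S := by
  have := hφ (-1)
  norm_num [h₀, hφ.apply_neg_one h₀ h₁] at this
  linear_combination this

theorem mem_symmTetranacci {ζ η : R} (hφ : IsSymmFibonacci S φ)
    (hS : S ^ 2 - η * S - ζ - 2 = 0) : φ ∈ symmTetranacci ζ η := by
  intro j
  have eNext := hφ (j + 1)
  have e := hφ j
  have ePrev := hφ (j - 1)
  rw [add_assoc, one_add_one_eq_two, add_sub_cancel_right] at eNext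
  rw [sub_add_cancel, sub_sub, one_add_one_eq_two] at ePrev
  linear_combination eNext + (S - η) * e + ePrev + φ j * hS

end IsSymmFibonacci

theorem symmTetranacci.ext {ζ η : R} {f g : ℤ → R} (hf : f ∈ symmTetranacci ζ η)
    (hg : g ∈ symmTetranacci ζ η) (hm2 : f (-2) = g (-2)) (hm1 : f (-1) = g (-1))
    (h₀ : f 0 = g 0) (h₁ : f 1 = g 1) : f = g := by
  have shifted : ∀ u ∈ symmTetranacci ζ η, ∀ j : ℤ,
      u (j + 4) = ζ * u (j + 2) - u j + η * (u (j + 3) + u (j + 1)) := fun u hu j => by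
    have h := hu (j + 2)
    ring_nf at h ⊢
    exact h
  funext j
  refine Int.forall_of_four_consecutive (P := fun j => f j = g j) (-2) hm2 ?_ ?_ ?_ ?_ ?_ j
  · norm_num [hm1]
  · norm_num [h₀]
  · norm_num [h₁]
  · intro j e₀ e₁ e₂ e₃
    linear_combination shifted f hf j - shifted g hg j + ζ * e₂ - e₀ + η * (e₃ + e₁)
  · intro j e₁ e₂ e₃ e₄
    linear_combination shifted f hf j - shifted g hg j + ζ * e₂ - e₄ + η * (e₃ + e₁)

theorem Tm2_fibonacci_decomposition (ζ η S₁ S₂ : ℂ)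
    (hS₁ : S₁ ^ 2 - η * S₁ - ζ - 2 = 0) (hS₂ : S₂ ^ 2 - η * S₂ - ζ - 2 = 0)
    (hne : S₁ ≠ S₂)
    (φ₁ φ₂ : ℤ → ℂ)
    (hrec₁ : ∀ j : ℤ, φ₁ (j + 1) = S₁ * φ₁ j - φ₁ (j - 1))
    (h10 : φ₁ 0 = 0) (h11 : φ₁ 1 = 1)
    (hrec₂ : ∀ j : ℤ, φ₂ (j + 1) = S₂ * φ₂ j - φ₂ (j - 1))
    (h20 : φ₂ 0 = 0) (h21 : φ₂ 1 = 1)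
    (Tm2 : ℤ → ℂ)
    (hTrec : ∀ j : ℤ, Tm2 (j + 2) = ζ * Tm2 j - Tm2 (j - 2) + η * (Tm2 (j + 1) + Tm2 (j - 1)))
    (hTinit : Tm2 (-2) = 1 ∧ Tm2 (-1) = 0 ∧ Tm2 0 = 0 ∧ Tm2 1 = 0) :
    ∀ j : ℤ, Tm2 j = (φ₂ j - φ₁ j) / (S₁ - S₂) := by
  obtain ⟨hTm2, hTm1, hT₀, hT₁⟩ := hTinit
  have hφ₁ : φ₁ ∈ symmTetranacci ζ η := IsSymmFibonacci.mem_symmTetranacci hrec₁ hS₁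
  have hφ₂ : φ₂ ∈ symmTetranacci ζ η := IsSymmFibonacci.mem_symmTetranacci hrec₂ hS₂
  have hTφ : (S₁ - S₂) • Tm2 = φ₂ - φ₁ := by
    refine symmTetranacci.ext (Submodule.smul_mem _ _ hTrec) (Submodule.sub_mem _ hφ₂ hφ₁)
      ?_ ?_ ?_ ?_ <;>
    simp only [Pi.smul_apply, Pi.sub_apply, smul_eq_mul, hTm2, hTm1, hT₀, hT₁, h10, h11, h20, h21,
      IsSymmFibonacci.apply_neg_one hrec₁ h10 h11, IsSymmFibonacci.apply_neg_one hrec₂ h20 h21,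
      IsSymmFibonacci.apply_neg_two hrec₁ h10 h11, IsSymmFibonacci.apply_neg_two hrec₂ h20 h21] <;>
    ring
  intro j
  rw [eq_div_iff (sub_ne_zero.mpr hne), mul_comm]
  exact congrFun hTφ j
end

section
/- Let ζ, η ∈ ℂ with η² + 4(ζ+2) = 0, so S₁ = S₂ = S = η/2, and assume S² ≠ 4. Let φ : ℤ → ℂ satisfy φ(j+1) = S·φ(j) − φ(j−1), φ(0)=0, φ(1)=1. Then the basic Tetranacci polynomial 𝒯_{−2} satisfies 𝒯_{−2}(j) = [(1−j)·φ(j+1) + (1+j)·φ(j−1)]/(S² − 4) for all j ∈ ℤ. -/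
/-- Auxiliary predicate: `Tm2 k * (S^2-4)` equals the decomposition numerator. -/
def Pred (Tm2 φ : ℤ → ℂ) (S : ℂ) (k : ℤ) : Prop :=
  Tm2 k * (S ^ 2 - 4) = (1 - (k : ℂ)) * φ (k + 1) + (1 + (k : ℂ)) * φ (k - 1)

theorem Tm2_degenerate_decomposition (ζ η S : ℂ)
    (hdeg : η ^ 2 + 4 * (ζ + 2) = 0) (hS : S = η / 2) (hS4 : S ^ 2 ≠ 4)
    (φ : ℤ → ℂ) (hrec : ∀ j : ℤ, φ (j + 1) = S * φ j - φ (j - 1))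
    (h0 : φ 0 = 0) (h1 : φ 1 = 1)
    (Tm2 : ℤ → ℂ)
    (hTrec : ∀ j : ℤ, Tm2 (j + 2) = ζ * Tm2 j - Tm2 (j - 2) + η * (Tm2 (j + 1) + Tm2 (j - 1)))
    (hTinit : Tm2 (-2) = 1 ∧ Tm2 (-1) = 0 ∧ Tm2 0 = 0 ∧ Tm2 1 = 0) :
    ∀ j : ℤ, Tm2 j = ((1 - (j : ℂ)) * φ (j + 1) + (1 + (j : ℂ)) * φ (j - 1)) / (S ^ 2 - 4) := by
  obtain ⟨hT2, hT1, hT0, hT1'⟩ := hTinit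
  have hη : η = 2 * S := by rw [hS]; ring
  have hζ : ζ = -S ^ 2 - 2 := by
    rw [hS]; linear_combination (1/4 : ℂ) * hdeg
  have hD : (S ^ 2 - 4 : ℂ) ≠ 0 := sub_ne_zero.mpr hS4
  -- small φ values
  have φm1 : φ (-1) = -1 := by
    have h := hrec 0; norm_num [h0, h1] at h; linear_combination h
  have φ2 : φ 2 = S := by
    have h := hrec 1; norm_num [h0, h1] at h; linear_combination h
  have φm2 : φ (-2) = -S := by
    have h := hrec (-1); norm_num [h0, φm1] at h; linear_combination h
  have φm3 : φ (-3) = 1 - S ^ 2 := by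
    have h := hrec (-2); norm_num [φm1, φm2] at h; linear_combination h
  -- the numerator satisfies the Tetranacci recursion
  have step : ∀ j : ℤ,
      (1 - ((j : ℂ) + 2)) * φ (j + 3) + (1 + ((j : ℂ) + 2)) * φ (j + 1)
        = ζ * ((1 - (j : ℂ)) * φ (j + 1) + (1 + (j : ℂ)) * φ (j - 1))
          - ((1 - ((j : ℂ) - 2)) * φ (j - 1) + (1 + ((j : ℂ) - 2)) * φ (j - 3))
          + η * (((1 - ((j : ℂ) + 1)) * φ (j + 2) + (1 + ((j : ℂ) + 1)) * φ j)
               + ((1 - ((j : ℂ) - 1)) * φ j + (1 + ((j : ℂ) - 1)) * φ (j - 2))) := by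
    intro j
    have e1 : φ (j + 1) = S * φ j - φ (j - 1) := hrec j
    have e2 : φ (j + 2) = S * φ (j + 1) - φ j := by
      have h := hrec (j + 1)
      rw [show j + 1 + 1 = j + 2 by ring, show j + 1 - 1 = j by ring] at h; exact h
    have e3 : φ (j + 3) = S * φ (j + 2) - φ (j + 1) := by
      have h := hrec (j + 2)
      rw [show j + 2 + 1 = j + 3 by ring, show j + 2 - 1 = j + 1 by ring] at h; exact h
    have e4 : φ (j - 2) = S * φ (j - 1) - φ j := by
      have h := hrec (j - 1)
      rw [show j - 1 + 1 = j by ring, show j - 1 - 1 = j - 2 by ring] at h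
      linear_combination h
    have e5 : φ (j - 3) = S * φ (j - 2) - φ (j - 1) := by
      have h := hrec (j - 2)
      rw [show j - 2 + 1 = j - 1 by ring, show j - 2 - 1 = j - 3 by ring] at h
      linear_combination h
    rw [e3, e2, e5, e4, e1, hζ, hη]; ring
  -- base window
  have base : Pred Tm2 φ S (-2) ∧ Pred Tm2 φ S (-1) ∧ Pred Tm2 φ S 0 ∧ Pred Tm2 φ S 1 := by
    refine ⟨?_, ?_, ?_, ?_⟩ <;> unfold Pred <;>
      set_option linter.unnecessarySeqFocus false in
      norm_num [hT2, hT1, hT0, hT1', φm1, φm2, φm3, φ2, h0, h1] <;> ring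
  -- forward induction
  have fwd : ∀ j : ℤ, 0 ≤ j →
      Pred Tm2 φ S (j - 2) ∧ Pred Tm2 φ S (j - 1) ∧ Pred Tm2 φ S j ∧ Pred Tm2 φ S (j + 1) := by
    refine Int.le_induction ?_ ?_
    · simpa using base
    · intro j hj ih
      obtain ⟨p2, p1, p0, pp1⟩ := ih
      refine ⟨?_, ?_, pp1, ?_⟩
      · rw [show j + 1 - 2 = j - 1 by ring]; exact p1
      · rw [show j + 1 - 1 = j by ring]; exact p0
      · unfold Pred at p2 p1 p0 pp1 ⊢
        rw [show j + 1 + 1 = j + 2 by ring,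
            show j + 2 + 1 = j + 3 by ring, show j + 2 - 1 = j + 1 by ring]
        push_cast
        rw [show j - 2 + 1 = j - 1 by ring, show j - 2 - 1 = j - 3 by ring] at p2
        push_cast at p2
        rw [show j + 1 + 1 = j + 2 by ring, show j + 1 - 1 = j by ring] at pp1
        push_cast at pp1
        rw [show j - 1 + 1 = j by ring, show j - 1 - 1 = j - 2 by ring] at p1
        push_cast at p1
        linear_combination (S ^ 2 - 4) * hTrec j - step j + ζ * p0 - p2 + η * (pp1 + p1)
  -- backward induction
  have bwd : ∀ j : ℤ, j ≤ 0 →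
      Pred Tm2 φ S (j - 2) ∧ Pred Tm2 φ S (j - 1) ∧ Pred Tm2 φ S j ∧ Pred Tm2 φ S (j + 1) := by
    refine Int.le_induction_down ?_ ?_
    · simpa using base
    · intro j hj ih
      obtain ⟨p2, p1, p0, pp1⟩ := ih
      refine ⟨?_, ?_, ?_, ?_⟩
      · -- Pred (j - 3)
        have hT := hTrec (j - 1)
        rw [show j - 1 + 2 = j + 1 by ring, show j - 1 - 2 = j - 3 by ring,
            show j - 1 + 1 = j by ring, show j - 1 - 1 = j - 2 by ring] at hT
        have hs := step (j - 1)
        rw [show j - 1 + 3 = j + 2 by ring, show j - 1 + 1 = j by ring,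
            show j - 1 - 1 = j - 2 by ring, show j - 1 - 3 = j - 4 by ring,
            show j - 1 + 2 = j + 1 by ring, show j - 1 - 2 = j - 3 by ring] at hs
        push_cast at hs
        unfold Pred at p2 p1 p0 pp1 ⊢
        rw [show j - 1 - 2 = j - 3 by ring,
            show j - 3 + 1 = j - 2 by ring, show j - 3 - 1 = j - 4 by ring]
        push_cast
        rw [show j - 2 + 1 = j - 1 by ring, show j - 2 - 1 = j - 3 by ring] at p2
        push_cast at p2
        rw [show j + 1 + 1 = j + 2 by ring, show j + 1 - 1 = j by ring] at pp1
        push_cast at pp1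
        rw [show j - 1 + 1 = j by ring, show j - 1 - 1 = j - 2 by ring] at p1
        push_cast at p1
        linear_combination (S ^ 2 - 4) * hT - pp1 - hs + ζ * p1 + η * (p0 + p2)
      · rw [show j - 1 - 1 = j - 2 by ring]; exact p2
      · exact p1
      · rw [show j - 1 + 1 = j by ring]; exact p0
  -- conclude
  intro j
  rw [eq_div_iff hD]
  rcases le_or_gt 0 j with h | h
  · exact (fwd j h).2.2.1
  · exact (bwd j h.le).2.2.1
end

section
/- Let ζ, η ∈ ℂ with η = 2S, ζ = −S² − 2, and S² = 4. Let φ : ℤ → ℂ satisfy φ(j+1) = S·φ(j) − φ(j−1), φ(0)=0, φ(1)=1. Then the basic Tetranacci polynomial 𝒯_{−2} satisfies 𝒯_{−2}(j) = S·(1 − j²)·φ(j)/12 for all j ∈ ℤ. -/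
theorem Tm2_fully_degenerate_decomposition (ζ η S : ℂ)
    (hη : η = 2 * S) (hζ : ζ = -S ^ 2 - 2) (hS4 : S ^ 2 = 4)
    (φ : ℤ → ℂ) (hrec : ∀ j : ℤ, φ (j + 1) = S * φ j - φ (j - 1))
    (h0 : φ 0 = 0) (h1 : φ 1 = 1)
    (Tm2 : ℤ → ℂ)
    (hTrec : ∀ j : ℤ, Tm2 (j + 2) = ζ * Tm2 j - Tm2 (j - 2) + η * (Tm2 (j + 1) + Tm2 (j - 1)))
    (hTinit : Tm2 (-2) = 1 ∧ Tm2 (-1) = 0 ∧ Tm2 0 = 0 ∧ Tm2 1 = 0) :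
    ∀ j : ℤ, Tm2 j = S * (1 - (j : ℂ) ^ 2) * φ j / 12 := by
  obtain ⟨hT2, hT1, hT0, hTp1⟩ := hTinit
  set g : ℤ → ℂ := fun j => S * (1 - (j : ℂ) ^ 2) * φ j / 12 with hgdef
  have hφm1 : φ (-1) = -1 := by
    have h := hrec 0
    norm_num [h0, h1] at h
    linear_combination h
  have hφm2 : φ (-2) = -S := by
    have h := hrec (-1)
    norm_num [h0, hφm1] at h
    linear_combination h
  have hg2 : g (-2) = 1 := by
    simp only [hgdef, hφm2]
    push_cast
    field_simp
    linear_combination 3 * hS4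
  have hg1 : g (-1) = 0 := by simp [hgdef, hφm1]
  have hg0 : g 0 = 0 := by simp [hgdef, h0]
  have hgp1 : g 1 = 0 := by simp [hgdef]
  have key : ∀ j : ℤ, g (j + 2) = ζ * g j - g (j - 2) + η * (g (j + 1) + g (j - 1)) := by
    intro j
    have e1 := hrec j
    have e2 := hrec (j + 1)
    rw [show j + 1 + 1 = j + 2 by ring, show j + 1 - 1 = j by ring] at e2
    have e3 : φ (j - 2) = S * φ (j - 1) - φ j := by
      have h := hrec (j - 1)
      rw [show j - 1 + 1 = j by ring, show j - 1 - 1 = j - 2 by ring] at h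
      linear_combination h
    have hS : S = 2 ∨ S = -2 := by
      have h : (S - 2) * (S + 2) = 0 := by linear_combination hS4
      rcases mul_eq_zero.mp h with h | h
      · left; linear_combination h
      · right; linear_combination h
    subst hη hζ
    simp only [hgdef]
    push_cast
    rcases hS with h | h <;> subst h <;> rw [e2, e1, e3] <;> ring
  have fwd : ∀ n : ℕ, Tm2 ((n : ℤ) - 2) = g ((n : ℤ) - 2) ∧ Tm2 ((n : ℤ) - 1) = g ((n : ℤ) - 1)
      ∧ Tm2 (n : ℤ) = g (n : ℤ) ∧ Tm2 ((n : ℤ) + 1) = g ((n : ℤ) + 1) := by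
    intro n
    induction n with
    | zero =>
      norm_num [hT2, hT1, hT0, hTp1, hg2, hg1, hg0, hgp1]
    | succ n ih =>
      obtain ⟨i1, i2, i3, i4⟩ := ih
      have hnew : Tm2 ((n : ℤ) + 2) = g ((n : ℤ) + 2) := by
        rw [hTrec n, key n, i1, i2, i3, i4]
      refine ⟨?_, ?_, ?_, ?_⟩ <;> push_cast
      · rw [show (n : ℤ) + 1 - 2 = (n : ℤ) - 1 by ring]; exact i2
      · rw [show (n : ℤ) + 1 - 1 = (n : ℤ) by ring]; exact i3
      · exact i4
      · rw [show (n : ℤ) + 1 + 1 = (n : ℤ) + 2 by ring]; exact hnew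
  have bwd : ∀ n : ℕ, Tm2 (-2 - (n : ℤ)) = g (-2 - (n : ℤ)) ∧ Tm2 (-1 - (n : ℤ)) = g (-1 - (n : ℤ))
      ∧ Tm2 (-(n : ℤ)) = g (-(n : ℤ)) ∧ Tm2 (1 - (n : ℤ)) = g (1 - (n : ℤ)) := by
    intro n
    induction n with
    | zero =>
      norm_num [hT2, hT1, hT0, hTp1, hg2, hg1, hg0, hgp1]
    | succ n ih =>
      obtain ⟨i1, i2, i3, i4⟩ := ih
      have hT := hTrec (-1 - (n : ℤ))
      have hk := key (-1 - (n : ℤ))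
      rw [show -1 - (n : ℤ) + 2 = 1 - (n : ℤ) by ring, show -1 - (n : ℤ) + 1 = -(n : ℤ) by ring,
        show -1 - (n : ℤ) - 1 = -2 - (n : ℤ) by ring, show -1 - (n : ℤ) - 2 = -3 - (n : ℤ) by ring]
        at hT hk
      have hnew : Tm2 (-3 - (n : ℤ)) = g (-3 - (n : ℤ)) := by
        have : Tm2 (-3 - (n : ℤ)) = ζ * Tm2 (-1 - (n : ℤ)) - Tm2 (1 - (n : ℤ))
            + η * (Tm2 (-(n : ℤ)) + Tm2 (-2 - (n : ℤ))) := by linear_combination hT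
        rw [this, i1, i2, i3, i4]
        linear_combination -hk
      refine ⟨?_, ?_, ?_, ?_⟩ <;> push_cast
      · rw [show -2 - ((n : ℤ) + 1) = -3 - (n : ℤ) by ring]; exact hnew
      · rw [show -1 - ((n : ℤ) + 1) = -2 - (n : ℤ) by ring]; exact i1
      · rw [show -((n : ℤ) + 1) = -1 - (n : ℤ) by ring]; exact i2
      · rw [show 1 - ((n : ℤ) + 1) = -(n : ℤ) by ring]; exact i3
  intro j
  rcases le_or_gt (-2) j with h | h
  · have hn : ((j + 2).toNat : ℤ) = j + 2 := Int.toNat_of_nonneg (by omega)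
    have := (fwd (j + 2).toNat).1
    rw [hn, show j + 2 - 2 = j by ring] at this
    exact this
  · have hn : (((-2 - j).toNat : ℤ)) = -2 - j := Int.toNat_of_nonneg (by omega)
    have := (bwd (-2 - j).toNat).1
    rw [hn, show -2 - (-2 - j) = j by ring] at this
    exact this
end

section
/- Let ζ, η ∈ ℂ with S₁ ≠ S₂ the roots of S² − ηS − ζ − 2 = 0, and φ₁, φ₂ the associated Fibonacci-type sequences (φ_l(j+1) = S_l φ_l(j) − φ_l(j−1), φ_l(0)=0, φ_l(1)=1). Then any solution ξ of the symmetric Tetranacci recursion with initial values g_{−2},…,g_1 satisfies, for all j ∈ ℤ: ξ_j = φ₂(j)·(g_{−2} − S₁g_{−1} + g_0)/(S₁−S₂) − φ₁(j)·(g_{−2} − S₂g_{−1} + g_0)/(S₁−S₂) + φ₁(j+1)·(g_{−1} − S₂g_0 + g_1)/(S₁−S₂) − φ₂(j+1)·(g_{−1} − S₁g_0 + g_1)/(S₁−S₂). -/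
/-!
If `S² - η S - ζ - 2 = 0` then `x⁴ - η x³ - ζ x² - η x + 1 = (x² - S x + 1)(x² - (η - S) x + 1)`,
so every solution of the second-order recursion `φ (j + 1) = S φ j - φ (j - 1)` solves the
Tetranacci recursion. Solutions form a shift-invariant linear space, so the right-hand side is a
solution; it agrees with `ξ` at `-2, -1, 0, 1`, and a solution is determined by these four values
because the recursion can be run both forwards and backwards.
-/

variable {R : Type*} [CommRing R]

def IsTetranacci (ζ η : R) (ξ : ℤ → R) : Prop :=
  ∀ j : ℤ, ξ (j + 2) = ζ * ξ j - ξ (j - 2) + η * (ξ (j + 1) + ξ (j - 1))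

namespace IsTetranacci

variable {ζ η : R} {ξ ψ : ℤ → R}

theorem add (hξ : IsTetranacci ζ η ξ) (hψ : IsTetranacci ζ η ψ) :
    IsTetranacci ζ η (fun j => ξ j + ψ j) := fun j => by
  beta_reduce; linear_combination hξ j + hψ j

theorem sub (hξ : IsTetranacci ζ η ξ) (hψ : IsTetranacci ζ η ψ) :
    IsTetranacci ζ η (fun j => ξ j - ψ j) := fun j => by
  beta_reduce; linear_combination hξ j - hψ j

theorem mul_const (hξ : IsTetranacci ζ η ξ) (c : R) :
    IsTetranacci ζ η (fun j => ξ j * c) := fun j => by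
  beta_reduce; linear_combination c * hξ j

theorem shift (hξ : IsTetranacci ζ η ξ) : IsTetranacci ζ η (fun j => ξ (j + 1)) := fun j => by
  have h := hξ (j + 1)
  rw [show j + 1 + 2 = j + 2 + 1 by ring, show j + 1 - 2 = j - 2 + 1 by ring,
    show j + 1 - 1 = j - 1 + 1 by ring] at h
  exact h

theorem eq_zero_of_window (hξ : IsTetranacci ζ η ξ) (hm2 : ξ (-2) = 0) (hm1 : ξ (-1) = 0)
    (h0 : ξ 0 = 0) (h1 : ξ 1 = 0) (j : ℤ) : ξ j = 0 := by
  suffices window : ∀ n : ℤ, ξ (n - 2) = 0 ∧ ξ (n - 1) = 0 ∧ ξ n = 0 ∧ ξ (n + 1) = 0 from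
    (window j).2.2.1
  intro n
  induction n using Int.induction_on with
  | zero => simpa using ⟨hm2, hm1, h0, h1⟩
  | succ k ih =>
    obtain ⟨a, b, c, d⟩ := ih
    refine ⟨by rwa [show (k : ℤ) + 1 - 2 = k - 1 by ring], by rwa [add_sub_cancel_right], d, ?_⟩
    rw [show (k : ℤ) + 1 + 1 = k + 2 by ring, hξ k, a, b, c, d]
    ring
  | pred k ih =>
    obtain ⟨a, b, c, d⟩ := ih
    refine ⟨?_, by rwa [show -(k : ℤ) - 1 - 1 = -k - 2 by ring], b,
      by rwa [sub_add_cancel]⟩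
    -- the recursion at `-k - 1` solved for its lowest term
    have h := hξ (-k - 1)
    rw [show -(k : ℤ) - 1 + 2 = -k + 1 by ring, show -(k : ℤ) - 1 + 1 = -k by ring,
      show -(k : ℤ) - 1 - 1 = -k - 2 by ring, a, b, c, d] at h
    linear_combination h

end IsTetranacci

section SecondOrder

variable {S : R} {φ : ℤ → R} (hφ : ∀ j : ℤ, φ (j + 1) = S * φ j - φ (j - 1))
include hφ

theorem isTetranacci_of_secondOrder {ζ η : R} (hS : S ^ 2 - η * S - ζ - 2 = 0) :
    IsTetranacci ζ η φ := fun j => by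
  have up := hφ (j + 1)
  have down := hφ (j - 1)
  rw [show j + 1 + 1 = j + 2 by ring, add_sub_cancel_right] at up
  rw [sub_add_cancel, show j - 1 - 1 = j - 2 by ring] at down
  linear_combination up + down + (S - η) * hφ j + φ j * hS

theorem secondOrder_initial_values (h0 : φ 0 = 0) (h1 : φ 1 = 1) :
    φ (-1) = -1 ∧ φ (-2) = -S ∧ φ 2 = S := by
  have hm1 : φ (-1) = -1 := by
    have h := hφ 0
    norm_num [h0, h1] at h
    linear_combination h
  refine ⟨hm1, ?_, ?_⟩
  · have h := hφ (-1)
    norm_num [h0, hm1] at h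
    linear_combination h
  · have h := hφ 1
    norm_num [h0, h1] at h
    exact h

end SecondOrder

theorem tetranacci_full_fibonacci_decomposition (ζ η S₁ S₂ : ℂ)
    (hS₁ : S₁ ^ 2 - η * S₁ - ζ - 2 = 0) (hS₂ : S₂ ^ 2 - η * S₂ - ζ - 2 = 0)
    (hne : S₁ ≠ S₂)
    (φ₁ φ₂ : ℤ → ℂ)
    (hrec₁ : ∀ j : ℤ, φ₁ (j + 1) = S₁ * φ₁ j - φ₁ (j - 1))
    (h10 : φ₁ 0 = 0) (h11 : φ₁ 1 = 1)
    (hrec₂ : ∀ j : ℤ, φ₂ (j + 1) = S₂ * φ₂ j - φ₂ (j - 1))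
    (h20 : φ₂ 0 = 0) (h21 : φ₂ 1 = 1)
    (ξ : ℤ → ℂ)
    (hrec : ∀ j : ℤ, ξ (j + 2) = ζ * ξ j - ξ (j - 2) + η * (ξ (j + 1) + ξ (j - 1))) :
    ∀ j : ℤ, ξ j =
      φ₂ j * ((ξ (-2) - S₁ * ξ (-1) + ξ 0) / (S₁ - S₂)) -
      φ₁ j * ((ξ (-2) - S₂ * ξ (-1) + ξ 0) / (S₁ - S₂)) +
      φ₁ (j + 1) * ((ξ (-1) - S₂ * ξ 0 + ξ 1) / (S₁ - S₂)) -
      φ₂ (j + 1) * ((ξ (-1) - S₁ * ξ 0 + ξ 1) / (S₁ - S₂)) := by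
  have hd : S₁ - S₂ ≠ 0 := sub_ne_zero.mpr hne
  obtain ⟨φ₁m1, φ₁m2, φ₁2⟩ := secondOrder_initial_values hrec₁ h10 h11
  obtain ⟨φ₂m1, φ₂m2, φ₂2⟩ := secondOrder_initial_values hrec₂ h20 h21
  have hφ₁ := isTetranacci_of_secondOrder hrec₁ hS₁
  have hφ₂ := isTetranacci_of_secondOrder hrec₂ hS₂
  have hF := (((hφ₂.mul_const ((ξ (-2) - S₁ * ξ (-1) + ξ 0) / (S₁ - S₂))).sub
    (hφ₁.mul_const ((ξ (-2) - S₂ * ξ (-1) + ξ 0) / (S₁ - S₂)))).add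
    (hφ₁.shift.mul_const ((ξ (-1) - S₂ * ξ 0 + ξ 1) / (S₁ - S₂)))).sub
    (hφ₂.shift.mul_const ((ξ (-1) - S₁ * ξ 0 + ξ 1) / (S₁ - S₂)))
  intro j
  refine sub_eq_zero.mp ((IsTetranacci.sub hrec hF).eq_zero_of_window ?_ ?_ ?_ ?_ j) <;>
  · norm_num [φ₁m1, φ₁m2, φ₁2, φ₂m1, φ₂m2, φ₂2, h10, h11, h20, h21]
    field_simp
    ring
end
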